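/- arXiv:1107.2219 — 6 statements merged into one kernel-verified Lean document; each statement's English description precedes it below -/
import Mathlib

section
/- Let μ, ξ, C, R_s > 0 and 0 ≤ R_f < C/ξ - μR_s/ξ. Then S_obs(n) = R_s·S^(n+1) + (R_f - C/ξ)·(1 - S^(n+1)) < 0 for all natural numbers n ≥ 0, where S = μ/(μ+ξ). That is, when the compensation is below C/ξ - μR_s/ξ, balking is always strictly preferable. -/
theorem always_balk_when_low_compensation (μ ξ C Rs Rf : ℝ) (hμ : 0 < μ) (hξ : 0 < ξ)
    (hC : 0 < C) (hRs : 0 < Rs) (hRf0 : 0 ≤ Rf) (hRf : Rf < C / ξ - μ * Rs / ξ) (n : ℕ) :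
    Rs * (μ / (μ + ξ)) ^ (n + 1) + (Rf - C / ξ) * (1 - (μ / (μ + ξ)) ^ (n + 1)) < 0 := by
  set S : ℝ := μ / (μ + ξ) with hS
  have hsum : 0 < μ + ξ := by linarith
  have hS0 : 0 < S := div_pos hμ hsum
  have hS1 : S < 1 := (div_lt_one hsum).mpr (by linarith)
  have hpow0 : 0 < S ^ (n + 1) := pow_pos hS0 _
  have hpowS : S ^ (n + 1) ≤ S := by
    calc S ^ (n + 1) ≤ S ^ 1 := pow_le_pow_of_le_one hS0.le hS1.le (by omega)
    _ = S := pow_one S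
  have hpow1 : S ^ (n + 1) < 1 := pow_lt_one₀ hS0.le hS1 (by omega)
  -- Rf - C/ξ < -μ*Rs/ξ
  have hkey : Rf - C / ξ < -(μ * Rs / ξ) := by linarith
  have h1 : (Rf - C / ξ) * (1 - S ^ (n + 1)) < -(μ * Rs / ξ) * (1 - S ^ (n + 1)) :=
    mul_lt_mul_of_pos_right hkey (by linarith)
  have h2 : Rs * S ^ (n + 1) + -(μ * Rs / ξ) * (1 - S ^ (n + 1)) ≤ 0 := by
    -- S*(μ+ξ) = μ
    have hSμ : S * (μ + ξ) = μ := div_mul_cancel₀ μ hsum.ne'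
    have : S ^ (n + 1) * (μ + ξ) ≤ μ := by
      calc S ^ (n + 1) * (μ + ξ) ≤ S * (μ + ξ) := by nlinarith
      _ = μ := hSμ
    have ht : μ * Rs / ξ * ξ = μ * Rs := div_mul_cancel₀ _ hξ.ne'
    nlinarith [mul_le_mul_of_nonneg_left this hRs.le]
  linarith
end

section
/- Let μ, ξ, C, R_s > 0 and C/ξ - μR_s/ξ ≤ R_f < C/ξ. Set K = (C/ξ - R_f)/(R_s - R_f + C/ξ), S = μ/(μ+ξ), and n_e = ⌊ln K / ln S - 1⌋. Then n_e ≥ 0, and for every natural number n: S_obs(n) ≥ 0 if and only if n ≤ n_e, where S_obs(n) = R_s·S^(n+1) + (R_f - C/ξ)·(1 - S^(n+1)). -/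
open Real

theorem equilibrium_threshold (μ ξ C Rs Rf : ℝ) (hμ : 0 < μ) (hξ : 0 < ξ)
    (hC : 0 < C) (hRs : 0 < Rs)
    (hRf1 : C / ξ - μ * Rs / ξ ≤ Rf) (hRf2 : Rf < C / ξ) :
    0 ≤ ⌊Real.log ((C / ξ - Rf) / (Rs - Rf + C / ξ)) / Real.log (μ / (μ + ξ)) - 1⌋ ∧
    ∀ n : ℕ,
      (0 ≤ Rs * (μ / (μ + ξ)) ^ (n + 1) + (Rf - C / ξ) * (1 - (μ / (μ + ξ)) ^ (n + 1)) ↔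
        (n : ℤ) ≤ ⌊Real.log ((C / ξ - Rf) / (Rs - Rf + C / ξ)) / Real.log (μ / (μ + ξ)) - 1⌋) := by
  have hμξ : 0 < μ + ξ := by linarith
  have hS0 : 0 < μ / (μ + ξ) := div_pos hμ hμξ
  have hS1 : μ / (μ + ξ) < 1 := (div_lt_one hμξ).2 (by linarith)
  have hA : 0 < C / ξ - Rf := by linarith
  have hB : 0 < Rs - Rf + C / ξ := by linarith
  have hK0 : 0 < (C / ξ - Rf) / (Rs - Rf + C / ξ) := div_pos hA hB
  have hlogS : Real.log (μ / (μ + ξ)) < 0 := Real.log_neg hS0 hS1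
  have hKS : (C / ξ - Rf) / (Rs - Rf + C / ξ) ≤ μ / (μ + ξ) := by
    rw [div_le_div_iff₀ hB hμξ]
    have h1 : C / ξ - Rf ≤ μ * Rs / ξ := by linarith
    have h2 : (C / ξ - Rf) * ξ ≤ μ * Rs / ξ * ξ :=
      mul_le_mul_of_nonneg_right h1 hξ.le
    have h3 : μ * Rs / ξ * ξ = μ * Rs := div_mul_cancel₀ _ hξ.ne'
    nlinarith
  have hlogKS : Real.log ((C / ξ - Rf) / (Rs - Rf + C / ξ)) ≤ Real.log (μ / (μ + ξ)) :=
    Real.log_le_log hK0 hKS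
  have key : ∀ n : ℕ,
      (0 ≤ Rs * (μ / (μ + ξ)) ^ (n + 1) + (Rf - C / ξ) * (1 - (μ / (μ + ξ)) ^ (n + 1)) ↔
        (n : ℝ) ≤ Real.log ((C / ξ - Rf) / (Rs - Rf + C / ξ)) / Real.log (μ / (μ + ξ)) - 1) := by
    intro n
    have hpow : 0 < (μ / (μ + ξ)) ^ (n + 1) := pow_pos hS0 _
    have s1 : (0 ≤ Rs * (μ / (μ + ξ)) ^ (n + 1) + (Rf - C / ξ) * (1 - (μ / (μ + ξ)) ^ (n + 1))) ↔
        (C / ξ - Rf) / (Rs - Rf + C / ξ) ≤ (μ / (μ + ξ)) ^ (n + 1) := by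
      rw [div_le_iff₀ hB]
      constructor <;> intro h <;> nlinarith
    have s2 : (C / ξ - Rf) / (Rs - Rf + C / ξ) ≤ (μ / (μ + ξ)) ^ (n + 1) ↔
        Real.log ((C / ξ - Rf) / (Rs - Rf + C / ξ)) ≤ ((n : ℝ) + 1) * Real.log (μ / (μ + ξ)) := by
      rw [← Real.log_le_log_iff hK0 hpow, Real.log_pow]
      push_cast
      rfl
    have s3 : Real.log ((C / ξ - Rf) / (Rs - Rf + C / ξ)) ≤ ((n : ℝ) + 1) * Real.log (μ / (μ + ξ)) ↔
        ((n : ℝ) + 1) ≤ Real.log ((C / ξ - Rf) / (Rs - Rf + C / ξ)) / Real.log (μ / (μ + ξ)) := by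
      rw [le_div_iff_of_neg hlogS]
    rw [s1, s2, s3]
    constructor <;> intro h <;> linarith
  constructor
  · rw [Int.le_floor]
    push_cast
    rw [le_sub_iff_add_le, zero_add, le_div_iff_of_neg hlogS, one_mul]
    exact hlogKS
  · intro n
    rw [key n, Int.le_floor]
    push_cast
    rfl
end

section
/- Let λ, μ, ξ > 0, q ∈ (0,1], and let x₂ = x₂(q) ∈ (0,1) be the smaller root of (λq+μ+ξ)x = λq + μx². Define p(0,0) = ξ/(ξ+η) and p(k,1) = η(1-x₂)x₂^k/(ξ+η) for k ≥ 0, where η > 0. Then these numbers are nonnegative, sum to 1, and satisfy the balance equations: η·p(0,0) = ξ·Σ_{k≥0} p(k,1); (λq+ξ)p(0,1) = μ·p(1,1) + η·p(0,0); and (λq+μ+ξ)p(k,1) = λq·p(k-1,1) + μ·p(k+1,1) for k ≥ 1. -/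
/-!
The operative-state probabilities form a geometric sequence `C (1 - x₂) x₂ᵏ` with
`C = η / (ξ + η)`, so they sum to `C`, and the two balance equations of the operative states
both reduce to `x₂` being a root of `λq - (λq + μ + ξ) x + μ x² = 0`.
-/

theorem hasSum_mul_one_sub_mul_geometric {x : ℝ} (C : ℝ) (h₀ : 0 ≤ x) (h₁ : x < 1) :
    HasSum (fun k : ℕ => C * (1 - x) * x ^ k) C := by
  have h := (hasSum_geometric_of_lt_one h₀ h₁).mul_left (C * (1 - x))
  rwa [mul_assoc, mul_inv_cancel₀ (sub_ne_zero.2 h₁.ne'), mul_one] at h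

section QuadraticRoot

variable {a b c x : ℝ} (hroot : (a + b + c) * x = a + b * x ^ 2)
include hroot

theorem mul_pow_balance_of_root (C : ℝ) (k : ℕ) :
    (a + b + c) * (C * x ^ (k + 1)) = a * (C * x ^ k) + b * (C * x ^ (k + 2)) := by
  linear_combination C * x ^ k * hroot

theorem boundary_balance_of_root (C : ℝ) :
    (a + c) * (C * (1 - x) * x ^ 0) = b * (C * (1 - x) * x ^ 1) + c * C := by
  linear_combination -C * hroot

end QuadraticRoot

theorem stationary_distribution_general (lam μ ξ η q x2 : ℝ)
    (hξ : 0 < ξ) (hη : 0 < η)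
    (hx2a : 0 < x2) (hx2b : x2 < 1)
    (hroot : (lam * q + μ + ξ) * x2 = lam * q + μ * x2 ^ 2) :
    let p00 : ℝ := ξ / (ξ + η)
    let p : ℕ → ℝ := fun k => η * (1 - x2) * x2 ^ k / (ξ + η)
    (0 ≤ p00 ∧ ∀ k, 0 ≤ p k) ∧
    p00 + ∑' k : ℕ, p k = 1 ∧
    η * p00 = ξ * ∑' k : ℕ, p k ∧
    (lam * q + ξ) * p 0 = μ * p 1 + η * p00 ∧
    ∀ k : ℕ, 1 ≤ k → (lam * q + μ + ξ) * p k = lam * q * p (k - 1) + μ * p (k + 1) := by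
  intro p00 p
  set C := η / (ξ + η) with hC
  have hp : p = fun k => C * (1 - x2) * x2 ^ k := by
    funext k
    simp only [p, hC]
    ring
  have hsum : ∑' k : ℕ, p k = C := by
    rw [hp]
    exact (hasSum_mul_one_sub_mul_geometric C hx2a.le hx2b).tsum_eq
  have hp00 : η * p00 = ξ * C := by
    simp only [p00, hC]
    ring
  refine ⟨⟨by positivity, fun k => ?_⟩, ?_, by rw [hsum, hp00], ?_, ?_⟩
  · rw [hp]
    have : 0 ≤ 1 - x2 := sub_nonneg.2 hx2b.le
    positivity
  · rw [hsum, hC, ← add_div, div_self (by positivity)]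
  · rw [hp00, hp]
    exact boundary_balance_of_root hroot C
  · rintro (_ | m) hm
    · omega
    · rw [hp]
      exact mul_pow_balance_of_root hroot (C * (1 - x2)) m

theorem stationary_distribution (lam μ ξ η q x2 : ℝ) (hlam : 0 < lam) (hμ : 0 < μ)
    (hξ : 0 < ξ) (hη : 0 < η) (hq0 : 0 < q) (hq1 : q ≤ 1)
    (hx2a : 0 < x2) (hx2b : x2 < 1)
    (hroot : (lam * q + μ + ξ) * x2 = lam * q + μ * x2 ^ 2) :
    let p00 : ℝ := ξ / (ξ + η)
    let p : ℕ → ℝ := fun k => η * (1 - x2) * x2 ^ k / (ξ + η)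
    (0 ≤ p00 ∧ ∀ k, 0 ≤ p k) ∧
    p00 + ∑' k : ℕ, p k = 1 ∧
    η * p00 = ξ * ∑' k : ℕ, p k ∧
    (lam * q + ξ) * p 0 = μ * p 1 + η * p00 ∧
    ∀ k : ℕ, 1 ≤ k → (lam * q + μ + ξ) * p k = lam * q * p (k - 1) + μ * p (k + 1) :=
  stationary_distribution_general lam μ ξ η q x2 hξ hη hx2a hx2b hroot
end

section
/- Let η, ξ, μ, C, R_s > 0, R_f ≥ 0, and let x₂(q) be the smaller root of (λq+μ+ξ)x = λq+μx² for q ∈ [0,1], λ > 0. Then the expected social benefit Σ_{k=0}^∞ [η(1-x₂)x₂^k/(ξ+η)]·λq·[R_s·S^(k+1) + R_f(1 - S^(k+1))] - C·Σ_{k=0}^∞ k·η(1-x₂)x₂^k/(ξ+η), with S = μ/(μ+ξ) and x₂ = x₂(q), equals η·x₂·[μR_s(1-x₂) + ξR_f - C]/((ξ+η)(1-x₂)), using the identity λq = x₂[μ(1-x₂)+ξ]/(1-x₂). -/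
/-!
The stationary number of customers is geometric up to the factor `η / (ξ + η)`, so both series
are geometric: a customer who finds `k` others completes service before a catastrophe with
probability `S ^ (k + 1)`, which turns the reward series into `∑ (x₂ S) ^ k`, and the waiting-cost
series is the mean `x₂ / (1 - x₂)` of a geometric law. The root equation expresses the effective
arrival rate `λ q` through `x₂`, after which the closed form is a rational identity.
-/

section GeometricLaw

variable {𝕜 : Type*} [NormedField 𝕜] {x : 𝕜}

lemma hasSum_geometric_weight (hx : ‖x‖ < 1) : HasSum (fun k : ℕ => (1 - x) * x ^ k) 1 := by
  simpa [mul_inv_cancel₀ (isUnit_one_sub_of_norm_lt_one hx).ne_zero] using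
    (hasSum_geometric_of_norm_lt_one hx).mul_left (1 - x)

lemma hasSum_geometric_weight_mul_pow_succ {s : 𝕜} (hxs : ‖x * s‖ < 1) :
    HasSum (fun k : ℕ => (1 - x) * x ^ k * s ^ (k + 1)) ((1 - x) * s / (1 - x * s)) := by
  rw [div_eq_mul_inv]
  exact ((hasSum_geometric_of_norm_lt_one hxs).mul_left ((1 - x) * s)).congr_fun fun k => by ring

lemma hasSum_geometric_weight_mul_reward (hx : ‖x‖ < 1) {s : 𝕜} (hxs : ‖x * s‖ < 1) (a b : 𝕜) :
    HasSum (fun k : ℕ => (1 - x) * x ^ k * (a * s ^ (k + 1) + b * (1 - s ^ (k + 1))))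
      (b + (a - b) * ((1 - x) * s / (1 - x * s))) := by
  have h := ((hasSum_geometric_weight hx).mul_left b).add
    ((hasSum_geometric_weight_mul_pow_succ hxs).mul_left (a - b))
  rw [mul_one] at h
  exact h.congr_fun fun k => by ring

lemma hasSum_coe_mul_geometric_weight (hx : ‖x‖ < 1) :
    HasSum (fun k : ℕ => (k : 𝕜) * ((1 - x) * x ^ k)) (x / (1 - x)) := by
  have hx1 := (isUnit_one_sub_of_norm_lt_one hx).ne_zero
  rw [show x / (1 - x) = (1 - x) * (x / (1 - x) ^ 2) by field_simp]
  exact ((hasSum_coe_mul_geometric_of_norm_lt_one hx).mul_left (1 - x)).congr_fun fun k => by ring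

end GeometricLaw

lemma arrival_rate_eq_of_root {lq μ ξ x : ℝ} (hx : x ≠ 1)
    (hroot : (lq + μ + ξ) * x = lq + μ * x ^ 2) :
    lq = x * (μ * (1 - x) + ξ) / (1 - x) := by
  rw [eq_div_iff (sub_ne_zero.2 hx.symm)]
  linear_combination -hroot

lemma net_benefit_rate_eq_of_root {lq μ ξ x C Rs Rf : ℝ} (hμ : 0 ≤ μ) (hξ : 0 < ξ)
    (hx1 : x < 1) (hroot : (lq + μ + ξ) * x = lq + μ * x ^ 2) :
    lq * (Rf + (Rs - Rf) * ((1 - x) * (μ / (μ + ξ)) / (1 - x * (μ / (μ + ξ)))))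
        - C * (x / (1 - x))
      = x * (μ * Rs * (1 - x) + ξ * Rf - C) / (1 - x) := by
  have hx : 1 - x ≠ 0 := by linarith
  have hμξ : μ + ξ ≠ 0 := by linarith
  have hM : μ * (1 - x) + ξ ≠ 0 := by nlinarith
  have hS : 1 - x * (μ / (μ + ξ)) = (μ * (1 - x) + ξ) / (μ + ξ) := by field_simp; ring
  rw [arrival_rate_eq_of_root hx1.ne hroot, hS]
  field_simp
  ring

theorem social_benefit_unobservable_general (lam μ ξ η C Rs Rf q x2 : ℝ)
    (hμ : 0 < μ) (hξ : 0 < ξ)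
    (hx2a : 0 ≤ x2) (hx2b : x2 < 1)
    (hroot : (lam * q + μ + ξ) * x2 = lam * q + μ * x2 ^ 2) :
    (∑' k : ℕ, (η * (1 - x2) * x2 ^ k / (ξ + η)) * (lam * q) *
        (Rs * (μ / (μ + ξ)) ^ (k + 1) + Rf * (1 - (μ / (μ + ξ)) ^ (k + 1))))
      - C * ∑' k : ℕ, (k : ℝ) * (η * (1 - x2) * x2 ^ k / (ξ + η))
    = η * x2 * (μ * Rs * (1 - x2) + ξ * Rf - C) / ((ξ + η) * (1 - x2)) := by
  set S := μ / (μ + ξ)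
  have hx : ‖x2‖ < 1 := by rwa [Real.norm_of_nonneg hx2a]
  have hxS : ‖x2 * S‖ < 1 := by
    have hS : S < 1 := (div_lt_one (by linarith)).2 (by linarith)
    rw [Real.norm_of_nonneg (by positivity)]
    nlinarith
  have hreward : HasSum (fun k : ℕ => η * (1 - x2) * x2 ^ k / (ξ + η) * (lam * q) *
      (Rs * S ^ (k + 1) + Rf * (1 - S ^ (k + 1))))
      (η / (ξ + η) * (lam * q) * (Rf + (Rs - Rf) * ((1 - x2) * S / (1 - x2 * S)))) :=
    ((hasSum_geometric_weight_mul_reward hx hxS Rs Rf).mul_left _).congr_fun fun k => by ring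
  have hcost : HasSum (fun k : ℕ => (k : ℝ) * (η * (1 - x2) * x2 ^ k / (ξ + η)))
      (η / (ξ + η) * (x2 / (1 - x2))) :=
    ((hasSum_coe_mul_geometric_weight hx).mul_left _).congr_fun fun k => by ring
  rw [hreward.tsum_eq, hcost.tsum_eq, ← div_div]
  linear_combination η / (ξ + η) * net_benefit_rate_eq_of_root (C := C) (Rs := Rs) (Rf := Rf)
    hμ.le hξ hx2b hroot

theorem social_benefit_unobservable (lam μ ξ η C Rs Rf q x2 : ℝ)
    (hlam : 0 < lam) (hμ : 0 < μ) (hξ : 0 < ξ) (hη : 0 < η)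
    (hC : 0 < C) (hRs : 0 < Rs) (hRf : 0 ≤ Rf)
    (hq0 : 0 ≤ q) (hq1 : q ≤ 1) (hx2a : 0 ≤ x2) (hx2b : x2 < 1)
    (hroot : (lam * q + μ + ξ) * x2 = lam * q + μ * x2 ^ 2) :
    (∑' k : ℕ, (η * (1 - x2) * x2 ^ k / (ξ + η)) * (lam * q) *
        (Rs * (μ / (μ + ξ)) ^ (k + 1) + Rf * (1 - (μ / (μ + ξ)) ^ (k + 1))))
      - C * ∑' k : ℕ, (k : ℝ) * (η * (1 - x2) * x2 ^ k / (ξ + η))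
    = η * x2 * (μ * Rs * (1 - x2) + ξ * Rf - C) / ((ξ + η) * (1 - x2)) :=
  social_benefit_unobservable_general lam μ ξ η C Rs Rf q x2 hμ hξ hx2a hx2b hroot
end

section
/- Let λ, μ, ξ, C, R_s > 0 and R_f ≥ 0 with C/ξ - μR_s/ξ < R_f < C/ξ. Let D = μR_s(C - ξR_f), define q_e = (C - ξR_f + ξR_s)(μR_s + ξR_f - C)/(λ(C - ξR_f)R_s) and q_soc = √D(μR_s - √D)(ξR_s + √D)/(λ D R_s). Then q_soc ≤ q_e; the inequality reduces to μ²ξR_s³ + D√D ≥ 0, which always holds. -/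
theorem qsoc_le_qe (lam μ ξ C Rs Rf : ℝ) (hlam : 0 < lam) (hμ : 0 < μ) (hξ : 0 < ξ)
    (hC : 0 < C) (hRs : 0 < Rs) (hRf0 : 0 ≤ Rf)
    (h1 : C / ξ - μ * Rs / ξ < Rf) (h2 : Rf < C / ξ) :
    let D := μ * Rs * (C - ξ * Rf)
    let qe := (C - ξ * Rf + ξ * Rs) * (μ * Rs + ξ * Rf - C) / (lam * (C - ξ * Rf) * Rs)
    let qsoc := Real.sqrt D * (μ * Rs - Real.sqrt D) * (ξ * Rs + Real.sqrt D) / (lam * D * Rs)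
    qsoc ≤ qe := by
  intro D qe qsoc
  set a := C - ξ * Rf with ha_def
  have ha : 0 < a := by
    have h2' : Rf * ξ < C := (lt_div_iff₀ hξ).mp h2
    simp only [ha_def]; nlinarith
  have hm : a < μ * Rs := by
    have h1' : C - μ * Rs < ξ * Rf := by
      have := mul_lt_mul_of_pos_left h1 hξ
      have hc : ξ * (C / ξ - μ * Rs / ξ) = C - μ * Rs := by
        field_simp
      nlinarith [mul_div_cancel₀ C hξ.ne', mul_div_cancel₀ (μ * Rs) hξ.ne']
    simp only [ha_def]; linarith
  have hD : 0 < D := by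
    have : 0 < μ * Rs := by positivity
    simpa [D, ha_def] using mul_pos this ha
  set s := Real.sqrt D with hs_def
  have hs2 : s ^ 2 = μ * Rs * a := by
    rw [hs_def, Real.sq_sqrt hD.le]
  have hs : 0 < s := Real.sqrt_pos.mpr hD
  have ham : 0 < μ * Rs := by linarith
  have has : a ≤ s := by
    nlinarith [hs2, hs]
  have hsm : s ≤ μ * Rs := by
    nlinarith [hs2, hs]
  have hDval : D = μ * Rs * a := rfl
  have hnum : (C - ξ * Rf + ξ * Rs) = a + ξ * Rs := by ring
  have hnum2 : (μ * Rs + ξ * Rf - C) = μ * Rs - a := by simp [ha_def]; ring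
  have hden1 : 0 < lam * a * Rs := by positivity
  have hden2 : 0 < lam * D * Rs := by positivity
  show s * (μ * Rs - s) * (ξ * Rs + s) / (lam * D * Rs) ≤
      (C - ξ * Rf + ξ * Rs) * (μ * Rs + ξ * Rf - C) / (lam * (C - ξ * Rf) * Rs)
  rw [hnum, hnum2, ← ha_def, div_le_div_iff₀ hden2 hden1]
  have key : a * ((μ * Rs - s) * (ξ * Rs + s)) ≤ (a + ξ * Rs) * (μ * Rs - a) * s := by
    nlinarith [mul_nonneg (mul_nonneg (sq_nonneg a) (sub_nonneg.mpr hsm))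
        (le_of_lt hs), mul_nonneg (mul_nonneg (mul_nonneg hξ.le hRs.le)
        ham.le) (sub_nonneg.mpr has), hs2]
  have hlrs : 0 < lam * Rs := by positivity
  calc s * (μ * Rs - s) * (ξ * Rs + s) * (lam * a * Rs)
      = (a * ((μ * Rs - s) * (ξ * Rs + s))) * (lam * Rs) * s := by ring
    _ ≤ ((a + ξ * Rs) * (μ * Rs - a) * s) * (lam * Rs) * s := by
        have := mul_le_mul_of_nonneg_right
          (mul_le_mul_of_nonneg_right key hlrs.le) hs.le
        exact this
    _ = (a + ξ * Rs) * (μ * Rs - a) * (lam * Rs) * s ^ 2 := by ring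
    _ = (a + ξ * Rs) * (μ * Rs - a) * (lam * (μ * Rs * a) * Rs) := by
        rw [hs2]; ring
    _ = (a + ξ * Rs) * (μ * Rs - a) * (lam * D * Rs) := by rw [hDval]
end

section
/- Let μ, C, R_s > 0 and fix R_f ≥ 0, with C/μ < R_s (Naor's condition). Define for ξ > 0 with C/ξ - μR_s/ξ ≤ R_f < C/ξ the quantity n_e(ξ) = ln K(ξ)/ln S(ξ) - 1, where K(ξ) = (C/ξ - R_f)/(R_s - R_f + C/ξ) and S(ξ) = μ/(μ+ξ). Then lim_{ξ→0⁺} (ln K(ξ)/ln S(ξ)) = μR_s/C, i.e., as the catastrophe rate vanishes, the threshold converges to Naor's threshold μR_s/C - 1 (before taking floors). -/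
open Filter Topology

/-! Both logarithms vanish at `ξ = 0` once `ln K` is written as `ln ((C - R_f ξ) / (C + (R_s - R_f) ξ))`,
so the limit is the ratio of their derivatives at `0`, namely `(-R_s / C) / (-1 / μ)`. -/

theorem tendsto_div_nhdsNE_of_hasDerivAt {𝕜 : Type*} [NontriviallyNormedField 𝕜]
    {f g : 𝕜 → 𝕜} {a f' g' : 𝕜} (hf : HasDerivAt f f' a) (hg : HasDerivAt g g' a)
    (hfa : f a = 0) (hga : g a = 0) (hg' : g' ≠ 0) :
    Tendsto (fun x => f x / g x) (𝓝[≠] a) (𝓝 (f' / g')) := by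
  refine ((hasDerivAt_iff_tendsto_slope.mp hf).div
    (hasDerivAt_iff_tendsto_slope.mp hg) hg').congr' ?_
  filter_upwards [self_mem_nhdsWithin] with x hx
  simp only [Pi.div_apply, slope_def_field, hfa, hga, sub_zero]
  exact div_div_div_cancel_right₀ (sub_ne_zero.mpr hx) _ _

theorem Real.hasDerivAt_log_div_affine {a b c d x : ℝ} (hn : a + b * x ≠ 0)
    (hd : c + d * x ≠ 0) :
    HasDerivAt (fun y => Real.log ((a + b * y) / (c + d * y)))
      (b / (a + b * x) - d / (c + d * x)) x := by
  have hnum : HasDerivAt (fun y => a + b * y) b x := by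
    simpa using ((hasDerivAt_id x).const_mul b).const_add a
  have hden : HasDerivAt (fun y => c + d * y) d x := by
    simpa using ((hasDerivAt_id x).const_mul d).const_add c
  refine ((hnum.div hden hd).log (div_ne_zero hn hd)).congr_deriv ?_
  simp only [Pi.div_apply]
  field_simp

theorem naor_limit_general (μ C Rs Rf : ℝ) (hμ : 0 < μ) (hC : 0 < C) :
    Tendsto (fun ξ : ℝ =>
        Real.log ((C / ξ - Rf) / (Rs - Rf + C / ξ)) / Real.log (μ / (μ + ξ)))
      (nhdsWithin 0 (Set.Ioi 0)) (nhds (μ * Rs / C)) := by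
  have hK := Real.hasDerivAt_log_div_affine (a := C) (b := -Rf) (c := C) (d := Rs - Rf)
    (x := 0) (by simpa using hC.ne') (by simpa using hC.ne')
  have hS := Real.hasDerivAt_log_div_affine (a := μ) (b := 0) (c := μ) (d := 1)
    (x := 0) (by simpa using hμ.ne') (by simpa using hμ.ne')
  have hlim := tendsto_div_nhdsNE_of_hasDerivAt hK hS (by simp [hC.ne']) (by simp [hμ.ne'])
    (by simp [hμ.ne'])
  have hval : (-Rf / (C + -Rf * 0) - (Rs - Rf) / (C + (Rs - Rf) * 0)) /
      (0 / (μ + 0 * 0) - 1 / (μ + 1 * 0)) = μ * Rs / C := by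
    simp only [mul_zero, add_zero]
    field_simp
    ring
  have hK_eq (ξ : ℝ) (hξ : ξ ≠ 0) :
      (C / ξ - Rf) / (Rs - Rf + C / ξ) = (C + -Rf * ξ) / (C + (Rs - Rf) * ξ) := by
    rw [← div_div_div_cancel_right₀ hξ (C + -Rf * ξ)]
    congr 1 <;> field_simp <;> ring
  have hS_eq (ξ : ℝ) : μ / (μ + ξ) = (μ + 0 * ξ) / (μ + 1 * ξ) := by simp
  rw [hval] at hlim
  refine (hlim.mono_left (nhdsWithin_mono _ fun ξ hξ => ne_of_gt hξ)).congr' ?_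
  filter_upwards [self_mem_nhdsWithin] with ξ hξ
  rw [hK_eq ξ (ne_of_gt hξ), hS_eq]

theorem naor_limit (μ C Rs Rf : ℝ) (hμ : 0 < μ) (hC : 0 < C) (hRs : 0 < Rs)
    (hRf : 0 ≤ Rf) (hNaor : C / μ < Rs) :
    Tendsto (fun ξ : ℝ =>
        Real.log ((C / ξ - Rf) / (Rs - Rf + C / ξ)) / Real.log (μ / (μ + ξ)))
      (nhdsWithin 0 (Set.Ioi 0)) (nhds (μ * Rs / C)) :=
  naor_limit_general μ C Rs Rf hμ hC
end
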